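/- Let $\ell$ be a nonnegative integer and consider the matrix hypergeometric equation $s(1-s) F'' + (B - sC) F' + (\Lambda_0 - \lambda) F = 0$ on $\mathbb{C}^{\ell+1}$-valued functions, where $B = \sum_{j=0}^{\ell}(j+\tfrac32) E_{jj} - \sum_{j=0}^{\ell-1}(j+1) E_{j,j+1}$, $C = \sum_{j=0}^{\ell}(2j+3) E_{jj}$, and $\Lambda_0 = -\sum_{j=0}^{\ell} j(j+2) E_{jj}$. If this equation has a polynomial solution of degree $w$, then $\lambda = -(k+w)(k+w+2)$ for some integer $0 \le k \le \ell$, and the leading coefficient of any such solution is a scalar multiple of the standard basis vector $e_k$. -/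
import Mathlib


/-- `B = ∑_{j=0}^{ℓ} (j + 3/2) E_{jj} - ∑_{j=0}^{ℓ-1} (j+1) E_{j,j+1}`. -/
noncomputable def Bmat (ℓ : ℕ) : Matrix (Fin (ℓ + 1)) (Fin (ℓ + 1)) ℂ :=
  Matrix.of fun i j =>
    if i = j then ((i : ℕ) : ℂ) + 3 / 2
    else if (j : ℕ) = (i : ℕ) + 1 then -(((i : ℕ) : ℂ) + 1)
    else 0

/-- `C = ∑_{j=0}^{ℓ} (2j+3) E_{jj}`. -/
noncomputable def Cmat (ℓ : ℕ) : Matrix (Fin (ℓ + 1)) (Fin (ℓ + 1)) ℂ :=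
  Matrix.diagonal fun j : Fin (ℓ + 1) => 2 * ((j : ℕ) : ℂ) + 3

/-- `Λ₀ = -∑_{j=0}^{ℓ} j(j+2) E_{jj}`. -/
noncomputable def Lam0 (ℓ : ℕ) : Matrix (Fin (ℓ + 1)) (Fin (ℓ + 1)) ℂ :=
  Matrix.diagonal fun j : Fin (ℓ + 1) => -(((j : ℕ) : ℂ) * (((j : ℕ) : ℂ) + 2))


open Polynomial in
lemma hA (w : ℕ) (p : Polynomial ℂ) (h1 : p.coeff (w+1) = 0) :
    (X * (1 - X) * derivative (derivative p)).coeff w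
      = -((w:ℂ) * ((w:ℂ) - 1)) * p.coeff w := by
  have e : X * (1 - X) * derivative (derivative p)
      = derivative (derivative p) * X ^ 1 - derivative (derivative p) * X ^ 2 := by ring
  rw [e, coeff_sub]
  rcases w with _ | _ | n
  · simp [coeff_mul_X_pow', coeff_derivative]
  · simp [coeff_mul_X_pow', coeff_derivative, h1]
  · simp only [coeff_mul_X_pow', coeff_derivative]
    norm_num
    rw [show n+1+1-2 = n from by omega, h1]
    ring

open Polynomial in
lemma hBC (w : ℕ) (b c : ℂ) (p : Polynomial ℂ) (h1 : p.coeff (w+1) = 0) :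
    ((Polynomial.C b - X * Polynomial.C c) * derivative p).coeff w
      = -(c * (w:ℂ)) * p.coeff w := by
  have e : (Polynomial.C b - X * Polynomial.C c) * derivative p
      = Polynomial.C b * derivative p - Polynomial.C c * derivative p * X ^ 1 := by ring
  rw [e, coeff_sub]
  rcases w with _ | n
  · simp [coeff_mul_X_pow', coeff_derivative, coeff_C_mul, h1]
  · simp only [coeff_mul_X_pow', coeff_derivative, coeff_C_mul]
    norm_num
    rw [h1]
    ring

/-- If the matrix hypergeometric equation `s(1-s)F'' + (B - sC)F' + (Λ₀ - λ)F = 0` has a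
polynomial solution `F` of degree `w`, then `λ = -(k+w)(k+w+2)` for some `0 ≤ k ≤ ℓ`,
and the leading coefficient of any such solution is a scalar multiple of the standard
basis vector `e_k`. -/
theorem matrix_hypergeometric_polynomial_solution (ℓ w : ℕ) (lam : ℂ)
    (F : Fin (ℓ + 1) → Polynomial ℂ)
    (hdeg : ∀ i, (F i).natDegree ≤ w)
    (hlead : ∃ i, (F i).coeff w ≠ 0)
    (hode : ∀ i : Fin (ℓ + 1),
      Polynomial.X * (1 - Polynomial.X) *
          Polynomial.derivative (Polynomial.derivative (F i))
        + ∑ j : Fin (ℓ + 1),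
            (Polynomial.C (Bmat ℓ i j) - Polynomial.X * Polynomial.C (Cmat ℓ i j)) *
              Polynomial.derivative (F j)
        + ∑ j : Fin (ℓ + 1),
            Polynomial.C (Lam0 ℓ i j - (if i = j then lam else 0)) * F j = 0) :
    ∃ k : Fin (ℓ + 1),
      lam = -((((k : ℕ) : ℂ) + w) * (((k : ℕ) : ℂ) + w + 2)) ∧
      ∃ c : ℂ, ∀ i, (F i).coeff w = if i = k then c else 0 := by
  have hz : ∀ j, (F j).coeff (w+1) = 0 := fun j =>
    Polynomial.coeff_eq_zero_of_natDegree_lt (Nat.lt_succ_of_le (hdeg j))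
  have key : ∀ i : Fin (ℓ+1),
      (lam + (((i:ℕ):ℂ) + w) * (((i:ℕ):ℂ) + w + 2)) * (F i).coeff w = 0 := by
    intro i
    have h := congrArg (fun p => Polynomial.coeff p w) (hode i)
    simp only [Polynomial.coeff_add, Polynomial.coeff_zero, Polynomial.finset_sum_coeff] at h
    rw [hA w (F i) (hz i)] at h
    have hs1 : ∑ j, ((Polynomial.C (Bmat ℓ i j) - Polynomial.X * Polynomial.C (Cmat ℓ i j)) *
        Polynomial.derivative (F j)).coeff w
        = -((2*((i:ℕ):ℂ)+3) * (w:ℂ)) * (F i).coeff w := by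
      rw [Finset.sum_congr rfl (fun j _ => hBC w _ _ _ (hz j))]
      rw [Finset.sum_eq_single i]
      · rw [Cmat, Matrix.diagonal_apply_eq]
      · intro j _ hj
        rw [Cmat, Matrix.diagonal_apply_ne _ (Ne.symm hj)]
        simp
      · simp
    have hs2 : ∑ j, (Polynomial.C (Lam0 ℓ i j - (if i = j then lam else 0)) * F j).coeff w
        = (-((((i:ℕ):ℂ)) * (((i:ℕ):ℂ)+2)) - lam) * (F i).coeff w := by
      simp only [Polynomial.coeff_C_mul]
      rw [Finset.sum_eq_single i]
      · simp [Lam0, Matrix.diagonal_apply_eq]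
      · intro j _ hj
        rw [Lam0, Matrix.diagonal_apply_ne _ (Ne.symm hj), if_neg (Ne.symm hj)]
        simp
      · simp
    rw [hs1, hs2] at h
    linear_combination -h
  obtain ⟨k, hk⟩ := hlead
  have hlam : lam = -((((k:ℕ):ℂ) + w) * (((k:ℕ):ℂ) + w + 2)) := by
    rcases mul_eq_zero.mp (key k) with h | h
    · linear_combination h
    · exact absurd h hk
  refine ⟨k, hlam, (F k).coeff w, fun i => ?_⟩
  by_cases hik : i = k
  · simp [hik]
  · rw [if_neg hik]
    by_contra hne
    rcases mul_eq_zero.mp (key i) with h | h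
    · apply hik
      have heq : ((((i:ℕ)+w : ℕ):ℂ)) * ((((i:ℕ)+w : ℕ):ℂ) + 2)
          = (((k:ℕ)+w : ℕ):ℂ) * ((((k:ℕ)+w:ℕ):ℂ)+2) := by
        rw [hlam] at h
        push_cast
        linear_combination h
      set a := (i:ℕ) + w with ha
      set b := (k:ℕ) + w with hb
      have h3 : ((a:ℂ) - b) * ((a:ℂ) + b + 2) = 0 := by linear_combination heq
      have h4 : (a:ℂ) + b + 2 ≠ 0 := by
        intro hc
        have : ((a + b + 2 : ℕ):ℂ) ≠ 0 := Nat.cast_ne_zero.mpr (by omega)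
        apply this
        push_cast
        linear_combination hc
      have h5 : (a:ℂ) = b := by
        rcases mul_eq_zero.mp h3 with h' | h'
        · linear_combination h'
        · exact absurd h' h4
      have hab : a = b := Nat.cast_injective h5
      exact Fin.ext (by omega)
    · exact hne h
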